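/- Let V be a vector space over a field K and let Δ : V → V ⊗ V and β : V → V be K-linear maps. Set Δ_L := Δ − Δ^op where Δ^op := τ ∘ Δ with τ(a ⊗ b) = b ⊗ a, and let c_β(Λ) := (Λ ⊗ β) ∘ Λ − (β ⊗ Λ) ∘ Λ. Let P₁₃, P₁₂, P₂₃, P₂₁₃, P₂₃₁ be the K-linear maps on V⊗V⊗V given by P₁₃(a⊗b⊗c)=c⊗b⊗a, P₁₂(a⊗b⊗c)=b⊗a⊗c, P₂₃(a⊗b⊗c)=a⊗c⊗b, P₂₁₃(a⊗b⊗c)=b⊗c⊗a, P₂₃₁(a⊗b⊗c)=c⊗a⊗b. Then c_β(Δ_L) = c_β(Δ) − P₁₃ ∘ c_β(Δ) − P₂₁₃ ∘ (β ⊗ Δ) ∘ Δ − P₁₂ ∘ (Δ ⊗ β) ∘ Δ + P₂₃ ∘ (β ⊗ Δ) ∘ Δ + P₂₃₁ ∘ (Δ ⊗ β) ∘ Δ. -/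

import Mathlib

open TensorProduct

section

variable (K V : Type*) [Field K] [AddCommGroup V] [Module K V]

/-- The associator (V ⊗ V) ⊗ V → V ⊗ (V ⊗ V), used to identify the two triple
tensor products. -/
noncomputable def assocL : (V ⊗[K] V) ⊗[K] V →ₗ[K] V ⊗[K] (V ⊗[K] V) :=
  (TensorProduct.assoc K V V V).toLinearMap

/-- P₁₃ : a ⊗ b ⊗ c ↦ c ⊗ b ⊗ a on V ⊗ (V ⊗ V). -/
noncomputable def P13 : V ⊗[K] (V ⊗[K] V) →ₗ[K] V ⊗[K] (V ⊗[K] V) :=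
  assocL K V
    ∘ₗ TensorProduct.map (TensorProduct.comm K V V).toLinearMap LinearMap.id
    ∘ₗ (TensorProduct.comm K V (V ⊗[K] V)).toLinearMap

/-- P₁₂ : a ⊗ b ⊗ c ↦ b ⊗ a ⊗ c on V ⊗ (V ⊗ V). -/
noncomputable def P12 : V ⊗[K] (V ⊗[K] V) →ₗ[K] V ⊗[K] (V ⊗[K] V) :=
  assocL K V
    ∘ₗ TensorProduct.map (TensorProduct.comm K V V).toLinearMap LinearMap.id
    ∘ₗ (TensorProduct.assoc K V V V).symm.toLinearMap

/-- P₂₃ : a ⊗ b ⊗ c ↦ a ⊗ c ⊗ b on V ⊗ (V ⊗ V). -/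
noncomputable def P23 : V ⊗[K] (V ⊗[K] V) →ₗ[K] V ⊗[K] (V ⊗[K] V) :=
  TensorProduct.map LinearMap.id (TensorProduct.comm K V V).toLinearMap

/-- P₂₁₃ : a ⊗ b ⊗ c ↦ b ⊗ c ⊗ a on V ⊗ (V ⊗ V). -/
noncomputable def P213 : V ⊗[K] (V ⊗[K] V) →ₗ[K] V ⊗[K] (V ⊗[K] V) :=
  assocL K V ∘ₗ (TensorProduct.comm K V (V ⊗[K] V)).toLinearMap

/-- P₂₃₁ : a ⊗ b ⊗ c ↦ c ⊗ a ⊗ b on V ⊗ (V ⊗ V). -/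
noncomputable def P231 : V ⊗[K] (V ⊗[K] V) →ₗ[K] V ⊗[K] (V ⊗[K] V) :=
  (TensorProduct.comm K (V ⊗[K] V) V).toLinearMap
    ∘ₗ (TensorProduct.assoc K V V V).symm.toLinearMap

variable {K V}

/-- Δ^op := τ ∘ Δ, the opposite comultiplication. -/
noncomputable def deltaOp (Δ : V →ₗ[K] V ⊗[K] V) : V →ₗ[K] V ⊗[K] V :=
  (TensorProduct.comm K V V).toLinearMap ∘ₗ Δ

/-- The β-coassociator c_β(Λ) := (Λ ⊗ β) ∘ Λ − (β ⊗ Λ) ∘ Λ, with values in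
V ⊗ (V ⊗ V). -/
noncomputable def coassoc (Λ : V →ₗ[K] V ⊗[K] V) (β : V →ₗ[K] V) :
    V →ₗ[K] V ⊗[K] (V ⊗[K] V) :=
  assocL K V ∘ₗ TensorProduct.map Λ β ∘ₗ Λ - TensorProduct.map β Λ ∘ₗ Λ

end

/-! Expanding `c_β(Δ - τΔ)` bilinearly gives eight terms. Pulling `τ ⊗ 1` and `1 ⊗ τ` out of
`τΔ ⊗ β` and `β ⊗ τΔ`, and moving the remaining flip past the tensor map by
`(f ⊗ g) ∘ τ = τ ∘ (g ⊗ f)`, turns each of them into a permutation of `(Δ ⊗ β) ∘ Δ` or of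
`(β ⊗ Δ) ∘ Δ`. Composing the permutations on the right-hand side with the associator identifies
them with these, and the identity becomes one in an abelian group. -/

namespace TensorProduct

section

variable {R M N P Q S : Type*} [CommSemiring R] [AddCommMonoid M] [AddCommMonoid N]
  [AddCommMonoid P] [AddCommMonoid Q] [AddCommMonoid S]
  [Module R M] [Module R N] [Module R P] [Module R Q] [Module R S]

theorem map_comp_comm_comp (f : M →ₗ[R] P) (g : N →ₗ[R] Q) (h : S →ₗ[R] N ⊗[R] M) :
    map f g ∘ₗ (TensorProduct.comm R N M).toLinearMap ∘ₗ h
      = (TensorProduct.comm R Q P).toLinearMap ∘ₗ map g f ∘ₗ h := by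
  rw [← LinearMap.comp_assoc, map_comp_comm_eq, LinearMap.comp_assoc]

end

section

variable {R M N P Q : Type*} [CommSemiring R] [AddCommMonoid M] [AddCommMonoid N]
  [AddCommGroup P] [AddCommGroup Q] [Module R M] [Module R N] [Module R P] [Module R Q]

theorem map_sub_left (f₁ f₂ : M →ₗ[R] P) (g : N →ₗ[R] Q) :
    map (f₁ - f₂) g = map f₁ g - map f₂ g :=
  (mapBilinear (RingHom.id R) M N P Q).map_sub₂ f₁ f₂ g

theorem map_sub_right (f : M →ₗ[R] P) (g₁ g₂ : N →ₗ[R] Q) :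
    map f (g₁ - g₂) = map f g₁ - map f g₂ :=
  (mapBilinear (RingHom.id R) M N P Q f).map_sub g₁ g₂

end

end TensorProduct

section

variable {K V : Type*} [Field K] [AddCommGroup V] [Module K V]

theorem P12_comp_assocL :
    P12 K V ∘ₗ assocL K V = assocL K V ∘ₗ (TensorProduct.comm K V V).toLinearMap.rTensor V := by
  ext x y z
  rfl

theorem P13_comp_assocL :
    P13 K V ∘ₗ assocL K V
      = (TensorProduct.comm K V V).toLinearMap.lTensor V
          ∘ₗ (TensorProduct.comm K (V ⊗[K] V) V).toLinearMap := by
  ext x y z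
  rfl

theorem P231_comp_assocL :
    P231 K V ∘ₗ assocL K V = (TensorProduct.comm K (V ⊗[K] V) V).toLinearMap := by
  ext x y z
  rfl

end

/-- the expression of the β-coassociator of Δ_L := Δ − Δ^op in terms
of Δ alone. -/
theorem stmt15 {K V : Type*} [Field K] [AddCommGroup V] [Module K V]
    (Δ : V →ₗ[K] V ⊗[K] V) (β : V →ₗ[K] V) :
    coassoc (Δ - deltaOp Δ) β
      = coassoc Δ β - P13 K V ∘ₗ coassoc Δ β
        - P213 K V ∘ₗ TensorProduct.map β Δ ∘ₗ Δ
        - P12 K V ∘ₗ assocL K V ∘ₗ TensorProduct.map Δ β ∘ₗ Δ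
        + P23 K V ∘ₗ TensorProduct.map β Δ ∘ₗ Δ
        + P231 K V ∘ₗ assocL K V ∘ₗ TensorProduct.map Δ β ∘ₗ Δ := by
  simp only [coassoc, deltaOp, TensorProduct.map_sub_left, TensorProduct.map_sub_right,
    LinearMap.comp_sub, LinearMap.sub_comp, ← LinearMap.rTensor_comp_map,
    ← LinearMap.lTensor_comp_map, LinearMap.comp_assoc, TensorProduct.map_comp_comm_comp]
  simp only [← LinearMap.comp_assoc, P12_comp_assocL, P13_comp_assocL, P231_comp_assocL]
  simp only [LinearMap.comp_assoc, P13, P213, P23, LinearMap.rTensor, LinearMap.lTensor]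
  abel
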